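/- arXiv:1902.04553 — 4 statements merged into one kernel-verified Lean document; each statement's English description precedes it below -/
import Mathlib

section
/- The shifted Chebyshev polynomial of degree m satisfies T̃_m(x) = Σ_{i=0}^m (-1)^{m-i} [C(2m,2i)/C(m,i)] B_i^m(x), where B_i^m(x) = C(m,i) x^i (1-x)^{m-i}. -/
/-- The `i`-th Bernstein basis polynomial of degree `m`. -/
noncomputable def bern (m i : ℕ) (x : ℝ) : ℝ := (m.choose i : ℝ) * x ^ i * (1 - x) ^ (m - i)

/-- The Chebyshev polynomial of the first kind of degree `m` shifted to `[0,1]`. -/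
noncomputable def shiftedCheb (m : ℕ) (x : ℝ) : ℝ :=
  (Polynomial.Chebyshev.T ℝ (m : ℤ)).eval (2 * x - 1)

/-! Write `x = u²` and `x - 1 = t²` with `u, t ∈ ℂ`. Then `a = (u + t)²` and `b = (u - t)²` satisfy
`a b = (u² - t²)² = 1` and `a + b = 2 (2x - 1)`, so the Chebyshev identity `2 T_m((a + b)/2) = aᵐ + bᵐ`
gives `2 T̃_m(x) = (u + t)²ᵐ + (u - t)²ᵐ`. In the binomial expansion of the right-hand side the odd
powers of `t` cancel, leaving `2 ∑ C(2m, 2i) xⁱ (x - 1)ᵐ⁻ⁱ`. -/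

open Finset Polynomial

theorem Finset.sum_range_two_mul_add_one {M : Type*} [AddCommMonoid M] (f : ℕ → M) (m : ℕ) :
    ∑ k ∈ range (2 * m + 1), f k =
      ∑ i ∈ range (m + 1), f (2 * i) + ∑ i ∈ range m, f (2 * i + 1) := by
  induction m with
  | zero => simp
  | succ m ih =>
    rw [show 2 * (m + 1) + 1 = 2 * m + 1 + 1 + 1 by ring, sum_range_succ, sum_range_succ, ih,
      sum_range_succ (fun i => f (2 * i)) (m + 1), sum_range_succ (fun i => f (2 * i + 1)) m,
      mul_add_one]
    abel

theorem add_pow_two_mul_add_sub_pow_two_mul {R : Type*} [CommRing R] (u t : R) (m : ℕ) :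
    (u + t) ^ (2 * m) + (u - t) ^ (2 * m) =
      2 * ∑ i ∈ range (m + 1), u ^ (2 * i) * t ^ (2 * (m - i)) * ((2 * m).choose (2 * i) : R) := by
  rw [sub_eq_add_neg, add_pow, add_pow, ← sum_add_distrib, sum_range_two_mul_add_one, mul_sum]
  have odd_terms_cancel : ∀ i ∈ range m,
      u ^ (2 * i + 1) * t ^ (2 * m - (2 * i + 1)) * ((2 * m).choose (2 * i + 1) : R) +
        u ^ (2 * i + 1) * (-t) ^ (2 * m - (2 * i + 1)) * ((2 * m).choose (2 * i + 1) : R) = 0 := by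
    intro i hi
    have : Odd (2 * m - (2 * i + 1)) := ⟨m - i - 1, by have := mem_range.mp hi; omega⟩
    rw [this.neg_pow]
    ring
  rw [sum_eq_zero odd_terms_cancel, add_zero]
  refine sum_congr rfl fun i _ => ?_
  rw [show 2 * m - 2 * i = 2 * (m - i) by omega, (even_two_mul _).neg_pow]
  ring

namespace Polynomial.Chebyshev

theorem C_eval_two_mul {R : Type*} [CommRing R] (x : R) (n : ℤ) :
    (C R n).eval (2 * x) = 2 * (T R n).eval x := by
  simpa using congrArg (eval x) (C_comp_two_mul_X R n)

theorem C_eval_add_of_mul_eq_one {R : Type*} [CommRing R] {a b : R} (h : a * b = 1) (n : ℕ) :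
    (C R n).eval (a + b) = a ^ n + b ^ n := by
  rw [← dickson_one_one_eq_chebyshev_C, dickson_one_one_eval_add_inv a b h]

theorem two_mul_T_eval_sq_add_sq {R : Type*} [CommRing R] {u t : R} (h : u ^ 2 - t ^ 2 = 1)
    (n : ℕ) : 2 * (T R n).eval (u ^ 2 + t ^ 2) = (u + t) ^ (2 * n) + (u - t) ^ (2 * n) := by
  have hmul : (u + t) ^ 2 * (u - t) ^ 2 = 1 := by
    rw [← mul_pow, ← sq_sub_sq, h, one_pow]
  calc 2 * (T R n).eval (u ^ 2 + t ^ 2)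
      = (C R n).eval ((u + t) ^ 2 + (u - t) ^ 2) := by
        rw [← C_eval_two_mul]
        ring_nf
    _ = (u + t) ^ (2 * n) + (u - t) ^ (2 * n) := by
        rw [C_eval_add_of_mul_eq_one hmul, ← pow_mul, ← pow_mul, mul_comm 2 n]

theorem T_complex_eval_two_mul_sub_one (z : ℂ) (m : ℕ) :
    (T ℂ m).eval (2 * z - 1) =
      ∑ i ∈ range (m + 1),
        (-1) ^ (m - i) * ((2 * m).choose (2 * i) : ℂ) * z ^ i * (1 - z) ^ (m - i) := by
  set u := z ^ (2⁻¹ : ℂ)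
  set t := (z - 1) ^ (2⁻¹ : ℂ)
  have hu : u ^ 2 = z := Complex.cpow_nat_inv_pow z two_ne_zero
  have ht : t ^ 2 = z - 1 := Complex.cpow_nat_inv_pow _ two_ne_zero
  have key := two_mul_T_eval_sq_add_sq (show u ^ 2 - t ^ 2 = 1 by rw [hu, ht]; ring) m
  rw [add_pow_two_mul_add_sub_pow_two_mul, hu, ht, show z + (z - 1) = 2 * z - 1 by ring] at key
  rw [mul_left_cancel₀ two_ne_zero key]
  refine sum_congr rfl fun i _ => ?_
  rw [pow_mul, pow_mul, hu, ht, show z - 1 = -1 * (1 - z) by ring, mul_pow]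
  ring

end Polynomial.Chebyshev

theorem shiftedCheb_eq_sum_choose_two_mul (m : ℕ) (x : ℝ) :
    shiftedCheb m x =
      ∑ i ∈ range (m + 1),
        (-1) ^ (m - i) * ((2 * m).choose (2 * i) : ℝ) * x ^ i * (1 - x) ^ (m - i) := by
  apply Complex.ofReal_injective
  rw [shiftedCheb, Chebyshev.complex_ofReal_eval_T]
  push_cast
  exact Chebyshev.T_complex_eval_two_mul_sub_one x m

theorem shiftedCheb_eq_bernstein_combination (m : ℕ) (x : ℝ) :
    shiftedCheb m x =
      ∑ i ∈ Finset.range (m + 1),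
        (-1 : ℝ) ^ (m - i) * (((2 * m).choose (2 * i) : ℝ) / (m.choose i : ℝ)) * bern m i x := by
  rw [shiftedCheb_eq_sum_choose_two_mul]
  refine sum_congr rfl fun i hi => ?_
  have hchoose : (m.choose i : ℝ) ≠ 0 := by
    exact_mod_cast (Nat.choose_pos (Nat.lt_succ_iff.mp (mem_range.mp hi))).ne'
  rw [bern]
  field_simp
end

section
/- For natural numbers m ≤ t with t ≥ 1, and all 0 ≤ j ≤ t, the coefficients C(t,m,j) := Σ_{l=0}^{j} (-1)^{m-l} C(2m,2l) C(t-m,j-l) / C(t,j) satisfy √(Σ_{j=0}^t C(t,m,j)²) ≤ (t+1) e^{m²/t}, and in particular |C(t,m,j)| ≤ (t+1) e^{m²/t}. -/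
/-!
Up to the sign `(-1)^m`, `chebCoeff t m j` is `a_j / C(t,j)`, where `a_j` is the `j`-th
coefficient of `P(z) = G(z) (1 + z)^(t-m)` and `G(w²) = ((1 + i w)^(2m) + (1 - i w)^(2m)) / 2`.
Writing `z = w²`, the factors `1 ± i w` have squared norms averaging to `1 + |z|`, and an
elementary inequality for `(1 - v)^(t-m) (1 + v)^(t+m)` gives
`|P(z)|² ≤ (1 + |z|)^(2t) e^(2m²/t)`. Parseval's identity on the circle of radius `x / (1 - x)`
turns this into `∑ a_j² (x^j (1 - x)^(t-j))² ≤ e^(2m²/t)` for `0 ≤ x < 1`. Finally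
`1 / C(t,j) = (t + 1) ∫₀¹ x^j (1 - x)^(t-j) dx`, and Cauchy–Schwarz on `[0, 1]` followed by
integrating the previous bound gives `∑ chebCoeff² ≤ (t + 1)² e^(2m²/t)`.
-/

/-- The coefficient of the `j`-th Bernstein basis polynomial of degree `t` in the expansion of
the degree-`m` shifted Chebyshev polynomial. -/
noncomputable def chebCoeff (t m j : ℕ) : ℝ :=
  ∑ l ∈ Finset.range (j + 1),
    (-1 : ℝ) ^ (m + l) * ((2 * m).choose (2 * l) : ℝ) * ((t - m).choose (j - l) : ℝ)
      / (t.choose j : ℝ)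

open Finset Polynomial Nat

theorem one_add_le_exp_sub_sq_div_four {v : ℝ} (hv₀ : 0 ≤ v) (hv₁ : v ≤ 1) :
    1 + v ≤ Real.exp (v - v ^ 2 / 4) := by
  have hpos : 0 ≤ v - v ^ 2 / 4 := by nlinarith
  calc 1 + v ≤ 1 + (v - v ^ 2 / 4) + (v - v ^ 2 / 4) ^ 2 / 2 := by
        nlinarith [mul_nonneg (mul_nonneg hv₀ hv₀) (sub_nonneg.2 hv₁), pow_nonneg hv₀ 4]
    _ ≤ Real.exp (v - v ^ 2 / 4) := Real.quadratic_le_exp_of_nonneg hpos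

theorem one_sub_pow_mul_one_add_pow_le_exp {t m : ℕ} (hm : m ≤ t) {v : ℝ} (hv₀ : 0 ≤ v)
    (hv₁ : v ≤ 1) : (1 - v) ^ (t - m) * (1 + v) ^ (t + m) ≤ Real.exp (2 * m ^ 2 / t) := by
  have hsplit : (1 - v) ^ (t - m) * (1 + v) ^ (t + m) =
      (1 - v ^ 2) ^ (t - m) * (1 + v) ^ (2 * m) := by
    rw [show t + m = (t - m) + 2 * m by omega, pow_add, ← mul_assoc, ← mul_pow]
    ring
  have h₁ : (1 - v ^ 2) ^ (t - m) ≤ Real.exp (-v ^ 2) ^ (t - m) :=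
    pow_le_pow_left₀ (by nlinarith) (by linarith [Real.add_one_le_exp (-v ^ 2)]) _
  have h₂ : (1 + v) ^ (2 * m) ≤ Real.exp (v - v ^ 2 / 4) ^ (2 * m) :=
    pow_le_pow_left₀ (by linarith) (one_add_le_exp_sub_sq_div_four hv₀ hv₁) _
  have hexponent :
      ((t - m : ℕ) : ℝ) * -v ^ 2 + (2 * m : ℕ) * (v - v ^ 2 / 4) ≤ 2 * m ^ 2 / t := by
    rcases Nat.eq_zero_or_pos t with rfl | ht
    · obtain rfl : m = 0 := by omega
      simp
    rw [le_div_iff₀ (by exact_mod_cast ht), Nat.cast_sub hm]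
    have hmt : (m : ℝ) ≤ t := by exact_mod_cast hm
    push_cast
    -- `2m² - t (2mv - (t - m/2) v²) = ((tv - 2m)² + t (t - m) v²) / 2`
    nlinarith [sq_nonneg ((t : ℝ) * v - 2 * m),
      mul_nonneg (mul_nonneg (Nat.cast_nonneg t) (sub_nonneg.2 hmt)) (sq_nonneg v)]
  calc (1 - v) ^ (t - m) * (1 + v) ^ (t + m)
      ≤ Real.exp (-v ^ 2) ^ (t - m) * Real.exp (v - v ^ 2 / 4) ^ (2 * m) := by
        rw [hsplit]; exact mul_le_mul h₁ h₂ (by positivity) (by positivity)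
    _ ≤ Real.exp (2 * m ^ 2 / t) := by
        rw [← Real.exp_nat_mul, ← Real.exp_nat_mul, ← Real.exp_add, Real.exp_le_exp]
        exact hexponent

theorem pow_sub_mul_pow_add_le {t m : ℕ} (hm : m ≤ t) {X Y : ℝ} (hX : 0 ≤ X)
    (hXY : X ≤ Y) :
    X ^ (t - m) * Y ^ (t + m) ≤ ((X + Y) / 2) ^ (2 * t) * Real.exp (2 * m ^ 2 / t) := by
  have hexp : 1 ≤ Real.exp (2 * m ^ 2 / t) := Real.one_le_exp (by positivity)
  set a := (X + Y) / 2 with ha_def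
  rcases (show 0 ≤ a by linarith).eq_or_lt with ha | ha
  · obtain ⟨rfl, rfl⟩ : X = 0 ∧ Y = 0 := by constructor <;> linarith
    rw [← ha, ← pow_add, show t - m + (t + m) = 2 * t by omega]
    exact le_mul_of_one_le_right (by positivity) hexp
  set v := (Y - X) / (2 * a)
  have hX' : X = a * (1 - v) := by simp only [v]; field_simp; ring
  have hY' : Y = a * (1 + v) := by simp only [v]; field_simp; ring
  have hv₀ : 0 ≤ v := div_nonneg (by linarith) (by positivity)
  have hv₁ : v ≤ 1 := (div_le_one (by positivity)).2 (by linarith)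
  calc X ^ (t - m) * Y ^ (t + m)
      = a ^ (2 * t) * ((1 - v) ^ (t - m) * (1 + v) ^ (t + m)) := by
        rw [hX', hY', mul_pow, mul_pow, show 2 * t = (t - m) + (t + m) by omega, pow_add]; ring
    _ ≤ a ^ (2 * t) * Real.exp (2 * m ^ 2 / t) := by
        gcongr; exact one_sub_pow_mul_one_add_pow_le_exp hm hv₀ hv₁

theorem mul_pow_sub_mul_sq_mean_pow_le {t m : ℕ} (hm : m ≤ t) {X Y : ℝ} (hX : 0 ≤ X)
    (hY : 0 ≤ Y) :
    (X * Y) ^ (t - m) * ((X ^ m + Y ^ m) / 2) ^ 2 ≤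
      ((X + Y) / 2) ^ (2 * t) * Real.exp (2 * m ^ 2 / t) := by
  wlog hXY : X ≤ Y generalizing X Y
  · rw [mul_comm X, add_comm (X ^ m), add_comm X]
    exact this hY hX (le_of_not_ge hXY)
  calc (X * Y) ^ (t - m) * ((X ^ m + Y ^ m) / 2) ^ 2 ≤ (X * Y) ^ (t - m) * (Y ^ m) ^ 2 := by
        gcongr
        linarith [pow_le_pow_left₀ hX hXY m]
    _ = X ^ (t - m) * Y ^ (t + m) := by
        rw [mul_pow, ← pow_mul, mul_assoc, ← pow_add, show t - m + m * 2 = t + m by omega]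
    _ ≤ _ := pow_sub_mul_pow_add_le hm hX hXY

theorem sum_range_two_mul_add_one_eq_of_odd_eq_zero {M : Type*} [AddCommMonoid M] (f : ℕ → M)
    (hf : ∀ l, f (2 * l + 1) = 0) (m : ℕ) :
    ∑ k ∈ range (2 * m + 1), f k = ∑ l ∈ range (m + 1), f (2 * l) := by
  induction m with
  | zero => simp
  | succ m ih =>
    rw [show 2 * (m + 1) + 1 = 2 * m + 1 + 1 + 1 by ring, sum_range_succ, sum_range_succ, ih, hf,
      add_zero, sum_range_succ _ (m + 1)]
    rfl

theorem integral_pow_mul_one_sub_pow (j k : ℕ) :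
    ∫ x in (0 : ℝ)..1, x ^ j * (1 - x) ^ k = (j ! * k ! : ℝ) / (j + k + 1)! := by
  induction k generalizing j with
  | zero => simp [Nat.factorial_succ, field]
  | succ k ih =>
    have hsplit : ∫ x in (0 : ℝ)..1, x ^ j * (1 - x) ^ (k + 1) =
        (∫ x in (0 : ℝ)..1, x ^ j * (1 - x) ^ k) -
          ∫ x in (0 : ℝ)..1, x ^ (j + 1) * (1 - x) ^ k := by
      rw [← intervalIntegral.integral_sub (Continuous.intervalIntegrable (by fun_prop) _ _)
        (Continuous.intervalIntegrable (by fun_prop) _ _)]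
      congr 1 with x
      ring
    rw [hsplit, ih, ih, show j + 1 + k + 1 = j + k + 1 + 1 by omega,
      show j + (k + 1) + 1 = j + k + 1 + 1 by omega]
    push_cast [Nat.factorial_succ]
    field_simp
    ring

theorem inv_choose_eq_integral {t j : ℕ} (hj : j ≤ t) :
    ((t.choose j : ℝ))⁻¹ = (t + 1) * ∫ x in (0 : ℝ)..1, x ^ j * (1 - x) ^ (t - j) := by
  rw [integral_pow_mul_one_sub_pow, Nat.add_sub_cancel' hj, Nat.factorial_succ,
    ← Nat.choose_mul_factorial_mul_factorial hj]
  push_cast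
  have : (t.choose j : ℝ) ≠ 0 := by exact_mod_cast (Nat.choose_pos hj).ne'
  field_simp

theorem sq_integral_le_integral_sq {f : ℝ → ℝ} (hf : Continuous f) :
    (∫ x in (0 : ℝ)..1, f x) ^ 2 ≤ ∫ x in (0 : ℝ)..1, f x ^ 2 := by
  set c := ∫ x in (0 : ℝ)..1, f x
  have hvar : 0 ≤ ∫ x in (0 : ℝ)..1, (f x - c) ^ 2 :=
    intervalIntegral.integral_nonneg zero_le_one fun x _ => sq_nonneg _
  have hexpand :
      ∫ x in (0 : ℝ)..1, (f x - c) ^ 2 = (∫ x in (0 : ℝ)..1, f x ^ 2) - c ^ 2 := by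
    simp_rw [sub_sq]
    rw [intervalIntegral.integral_add (Continuous.intervalIntegrable (by fun_prop) _ _)
        (Continuous.intervalIntegrable (by fun_prop) _ _),
      intervalIntegral.integral_sub (Continuous.intervalIntegrable (by fun_prop) _ _)
        (Continuous.intervalIntegrable (by fun_prop) _ _)]
    simp [c, intervalIntegral.integral_const_mul, intervalIntegral.integral_mul_const]
    ring
  linarith

namespace Polynomial

theorem sum_sq_norm_coeff_le_of_norm_eval_sq_le (p : ℂ[X]) {B : ℝ}
    (h : ∀ z : ℂ, ‖z‖ = 1 → ‖p.eval z‖ ^ 2 ≤ B) :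
    ∑ i ∈ p.support, ‖p.coeff i‖ ^ 2 ≤ B := by
  rw [p.sum_sq_norm_coeff_eq_circleAverage]
  refine Real.circleAverage_mono_on_of_le_circle ?_ fun z hz => h z (by simpa using hz)
  exact (by fun_prop : Continuous fun z => ‖p.eval z‖ ^ 2).continuousOn.circleIntegrable'

theorem sum_range_sq_norm_coeff_mul_pow_le (p : ℂ[X]) {n : ℕ} (hn : p.natDegree < n) (r : ℝ)
    {B : ℝ} (h : ∀ z : ℂ, ‖z‖ = |r| → ‖p.eval z‖ ^ 2 ≤ B) :
    ∑ i ∈ range n, ‖p.coeff i‖ ^ 2 * r ^ (2 * i) ≤ B := by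
  set q := p.comp (C (r : ℂ) * X)
  have hq : q.natDegree < n :=
    natDegree_comp_le.trans_lt <| (mul_le_of_le_one_right' (by compute_degree!)).trans_lt hn
  have hsum := q.sum_sq_norm_coeff_le_of_norm_eval_sq_le fun z hz => by
    simpa [q, eval_comp, hz] using h (r * z)
  rw [← sum_def (f := fun _ c => ‖c‖ ^ 2), sum_over_range' _ (by simp) n hq] at hsum
  convert hsum using 2 with i
  rw [comp_C_mul_X_coeff, norm_mul, norm_pow, Complex.norm_real, Real.norm_eq_abs, mul_pow,
    ← pow_mul, mul_comm i, pow_mul, pow_mul, sq_abs]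

variable {p : ℂ[X]} {t : ℕ} {B : ℝ}

theorem sum_sq_norm_coeff_mul_sq_pow_mul_one_sub_pow_le
    (hp : p.natDegree ≤ t) (h : ∀ z : ℂ, ‖p.eval z‖ ^ 2 ≤ (1 + ‖z‖) ^ (2 * t) * B)
    {x : ℝ} (hx₀ : 0 ≤ x) (hx₁ : x < 1) :
    ∑ j ∈ range (t + 1), ‖p.coeff j‖ ^ 2 * (x ^ j * (1 - x) ^ (t - j)) ^ 2 ≤ B := by
  have hx : 0 < 1 - x := sub_pos.2 hx₁
  have hx' : 1 - x ≠ 0 := hx.ne'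
  set ρ := x / (1 - x)
  have hρ : 0 ≤ ρ := div_nonneg hx₀ hx.le
  have hρB := p.sum_range_sq_norm_coeff_mul_pow_le (Nat.lt_succ_of_le hp) ρ fun z hz => by
    rw [abs_of_nonneg hρ] at hz
    exact hz ▸ h z
  calc ∑ j ∈ range (t + 1), ‖p.coeff j‖ ^ 2 * (x ^ j * (1 - x) ^ (t - j)) ^ 2
      = (1 - x) ^ (2 * t) * ∑ j ∈ range (t + 1), ‖p.coeff j‖ ^ 2 * ρ ^ (2 * j) := by
        rw [mul_sum]
        refine sum_congr rfl fun j hj => ?_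
        rw [show 2 * t = 2 * (t - j) + 2 * j by have := mem_range.1 hj; omega]
        rw [pow_add, div_pow, mul_pow, ← pow_mul, ← pow_mul]
        field_simp
        ring
    _ ≤ (1 - x) ^ (2 * t) * ((1 + ρ) ^ (2 * t) * B) := by gcongr
    _ = B := by
        rw [← mul_assoc, ← mul_pow,
          show (1 - x) * (1 + ρ) = 1 by simp only [ρ]; field_simp; ring, one_pow, one_mul]

theorem sum_sq_norm_coeff_div_choose_sq_le (hp : p.natDegree ≤ t)
    (h : ∀ z : ℂ, ‖p.eval z‖ ^ 2 ≤ (1 + ‖z‖) ^ (2 * t) * B) :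
    ∑ j ∈ range (t + 1), ‖p.coeff j‖ ^ 2 / (t.choose j : ℝ) ^ 2 ≤ (t + 1) ^ 2 * B := by
  calc ∑ j ∈ range (t + 1), ‖p.coeff j‖ ^ 2 / (t.choose j : ℝ) ^ 2
      = (t + 1) ^ 2 * ∑ j ∈ range (t + 1),
          ‖p.coeff j‖ ^ 2 * (∫ x in (0 : ℝ)..1, x ^ j * (1 - x) ^ (t - j)) ^ 2 := by
        rw [mul_sum]
        refine sum_congr rfl fun j hj => ?_
        rw [div_eq_mul_inv, ← inv_pow,
          inv_choose_eq_integral (Nat.lt_succ_iff.1 (mem_range.1 hj))]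
        ring
    _ ≤ (t + 1) ^ 2 * ∑ j ∈ range (t + 1),
          ‖p.coeff j‖ ^ 2 * ∫ x in (0 : ℝ)..1, (x ^ j * (1 - x) ^ (t - j)) ^ 2 := by
        gcongr
        exact sq_integral_le_integral_sq (by fun_prop)
    _ = (t + 1) ^ 2 * ∫ x in (0 : ℝ)..1,
          ∑ j ∈ range (t + 1), ‖p.coeff j‖ ^ 2 * (x ^ j * (1 - x) ^ (t - j)) ^ 2 := by
        rw [intervalIntegral.integral_finsetSum fun j _ =>
          Continuous.intervalIntegrable (by fun_prop) _ _]
        simp only [intervalIntegral.integral_const_mul]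
    _ ≤ (t + 1) ^ 2 * ∫ _ in (0 : ℝ)..1, B := by
        gcongr
        refine intervalIntegral.integral_mono_on_of_le_Ioo zero_le_one
          (Continuous.intervalIntegrable (by fun_prop) _ _) intervalIntegrable_const fun x hx => ?_
        exact sum_sq_norm_coeff_mul_sq_pow_mul_one_sub_pow_le hp h hx.1.le hx.2
    _ = (t + 1) ^ 2 * B := by simp

end Polynomial

open Complex in
/-- `P = chebNumPoly t m` is the polynomial with `(-1)^m (1 - x)^t P(x / (1 - x)) = T̃_m(x)`. -/
noncomputable def chebNumPoly (t m : ℕ) : ℂ[X] :=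
  (∑ l ∈ range (m + 1), C ((-1) ^ l * ((2 * m).choose (2 * l) : ℂ)) * X ^ l) *
    (1 + X) ^ (t - m)

theorem natDegree_chebNumPoly_le {t m : ℕ} (hm : m ≤ t) :
    (chebNumPoly t m).natDegree ≤ t := by
  refine natDegree_mul_le.trans ?_
  have h₁ : (∑ l ∈ range (m + 1),
      C ((-1) ^ l * ((2 * m).choose (2 * l) : ℂ)) * X ^ l).natDegree ≤ m :=
    natDegree_sum_le_of_forall_le _ _ fun l hl =>
      natDegree_C_mul_X_pow_le _ _ |>.trans (Nat.lt_succ_iff.1 (mem_range.1 hl))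
  have h₂ : ((1 + X : ℂ[X]) ^ (t - m)).natDegree ≤ t - m :=
    (natDegree_pow_le_of_le _ (by compute_degree!)).trans_eq (mul_one _)
  omega

theorem coeff_chebNumPoly (t m j : ℕ) : (chebNumPoly t m).coeff j =
    ∑ l ∈ range (j + 1),
      (-1) ^ l * ((2 * m).choose (2 * l) : ℂ) * ((t - m).choose (j - l) : ℂ) := by
  have hG : ∀ l, (∑ i ∈ range (m + 1),
      C ((-1) ^ i * ((2 * m).choose (2 * i) : ℂ)) * X ^ i).coeff l =
        (-1) ^ l * ((2 * m).choose (2 * l) : ℂ) := by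
    intro l
    simp only [finsetSum_coeff, coeff_C_mul_X_pow, sum_ite_eq, mem_range]
    split_ifs with hl
    · rfl
    · rw [Nat.choose_eq_zero_of_lt (by omega), Nat.cast_zero, mul_zero]
  rw [chebNumPoly, coeff_mul, Nat.sum_antidiagonal_eq_sum_range_succ_mk]
  simp only [hG, coeff_one_add_X_pow]

theorem sq_chebCoeff (t m j : ℕ) :
    chebCoeff t m j ^ 2 = ‖(chebNumPoly t m).coeff j‖ ^ 2 / (t.choose j : ℝ) ^ 2 := by
  have hsign : chebCoeff t m j = (-1) ^ m * (∑ l ∈ range (j + 1),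
      (-1) ^ l * ((2 * m).choose (2 * l) : ℝ) * ((t - m).choose (j - l) : ℝ)) / t.choose j := by
    rw [chebCoeff, ← sum_div, mul_sum]
    simp only [pow_add, mul_assoc]
  rw [hsign, coeff_chebNumPoly, div_pow, mul_pow, ← pow_mul, pow_mul', neg_one_sq, one_pow,
    one_mul]
  congr 1
  rw [← sq_abs, ← Real.norm_eq_abs, ← Complex.norm_real]
  push_cast
  rfl

open Complex in
theorem chebNumPoly_eval_sq (t m : ℕ) (w : ℂ) :
    (chebNumPoly t m).eval (w ^ 2) =
      ((1 + I * w) ^ (2 * m) + (1 - I * w) ^ (2 * m)) / 2 *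
        ((1 + I * w) * (1 - I * w)) ^ (t - m) := by
  have hbinom : (1 + I * w) ^ (2 * m) + (1 - I * w) ^ (2 * m) =
      ∑ k ∈ range (2 * m + 1), ((I * w) ^ k + (-(I * w)) ^ k) * ((2 * m).choose k : ℂ) := by
    rw [add_comm 1, sub_eq_neg_add, add_pow, add_pow, ← sum_add_distrib]
    refine sum_congr rfl fun k _ => by ring
  have heven : ∀ l, ((I * w) ^ (2 * l) + (-(I * w)) ^ (2 * l)) * ((2 * m).choose (2 * l) : ℂ) =
      2 * ((-1) ^ l * ((2 * m).choose (2 * l) : ℂ) * (w ^ 2) ^ l) := by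
    intro l
    rw [(even_two_mul l).neg_pow, pow_mul, mul_pow, I_sq]
    ring
  rw [hbinom, sum_range_two_mul_add_one_eq_of_odd_eq_zero _ (fun l => by
    rw [(odd_two_mul_add_one l).neg_pow]; ring), sum_congr rfl fun l _ => heven l, ← mul_sum]
  simp only [chebNumPoly, eval_mul, eval_finsetSum, eval_pow, eval_add, eval_one, eval_X, eval_C]
  rw [mul_div_cancel_left₀ _ two_ne_zero, show (1 + I * w) * (1 - I * w) = 1 + w ^ 2 by
    linear_combination (-w ^ 2) * I_sq]

open Complex in
theorem norm_eval_chebNumPoly_sq_le {t m : ℕ} (hm : m ≤ t) (z : ℂ) :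
    ‖(chebNumPoly t m).eval z‖ ^ 2 ≤ (1 + ‖z‖) ^ (2 * t) * Real.exp (2 * m ^ 2 / t) := by
  obtain ⟨w, rfl⟩ : ∃ w, w ^ 2 = z := IsAlgClosed.exists_pow_nat_eq z two_pos
  have hpar : ‖1 + I * w‖ ^ 2 + ‖1 - I * w‖ ^ 2 = 2 * (1 + ‖w ^ 2‖) := by
    have := parallelogram_law_with_norm ℝ (1 : ℂ) (I * w)
    rw [norm_pow, norm_mul, norm_I, norm_one] at *
    linarith
  have hG : ‖((1 + I * w) ^ (2 * m) + (1 - I * w) ^ (2 * m)) / 2‖ ≤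
      ((‖1 + I * w‖ ^ 2) ^ m + (‖1 - I * w‖ ^ 2) ^ m) / 2 := by
    rw [norm_div, RCLike.norm_ofNat, ← pow_mul, ← pow_mul, ← norm_pow, ← norm_pow]
    gcongr
    exact norm_add_le _ _
  rw [chebNumPoly_eval_sq]
  calc _ = (‖1 + I * w‖ ^ 2 * ‖1 - I * w‖ ^ 2) ^ (t - m) *
        ‖((1 + I * w) ^ (2 * m) + (1 - I * w) ^ (2 * m)) / 2‖ ^ 2 := by
          rw [norm_mul, norm_pow, norm_mul]; ring
    _ ≤ (‖1 + I * w‖ ^ 2 * ‖1 - I * w‖ ^ 2) ^ (t - m) *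
        (((‖1 + I * w‖ ^ 2) ^ m + (‖1 - I * w‖ ^ 2) ^ m) / 2) ^ 2 := by gcongr
    _ ≤ _ := mul_pow_sub_mul_sq_mean_pow_le hm (sq_nonneg _) (sq_nonneg _)
    _ = _ := by rw [hpar, mul_div_cancel_left₀ _ two_ne_zero]

theorem chebCoeff_l2_bound_general (t m : ℕ) (hm : m ≤ t) :
    Real.sqrt (∑ j ∈ Finset.range (t + 1), (chebCoeff t m j) ^ 2)
        ≤ (t + 1) * Real.exp ((m : ℝ) ^ 2 / t) ∧
      ∀ j ≤ t, |chebCoeff t m j| ≤ (t + 1) * Real.exp ((m : ℝ) ^ 2 / t) := by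
  have hsum : ∑ j ∈ range (t + 1), chebCoeff t m j ^ 2 ≤
      ((t + 1) * Real.exp ((m : ℝ) ^ 2 / t)) ^ 2 := by
    simp_rw [sq_chebCoeff]
    refine (sum_sq_norm_coeff_div_choose_sq_le (natDegree_chebNumPoly_le hm)
      (norm_eval_chebNumPoly_sq_le hm)).trans_eq ?_
    rw [mul_pow, ← Real.exp_nat_mul]
    ring_nf
  have hl2 := (Real.sqrt_le_sqrt hsum).trans_eq (Real.sqrt_sq (by positivity))
  refine ⟨hl2, fun j hj => (Real.abs_le_sqrt ?_).trans hl2⟩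
  exact single_le_sum (fun i _ => sq_nonneg (chebCoeff t m i)) (mem_range.2 (by omega))

theorem chebCoeff_l2_bound (t m : ℕ) (hm : m ≤ t) (ht : 1 ≤ t) :
    Real.sqrt (∑ j ∈ Finset.range (t + 1), (chebCoeff t m j) ^ 2)
        ≤ (t + 1) * Real.exp ((m : ℝ) ^ 2 / t) ∧
      ∀ j ≤ t, |chebCoeff t m j| ≤ (t + 1) * Real.exp ((m : ℝ) ^ 2 / t) :=
  chebCoeff_l2_bound_general t m hm
end

section
/- For real numbers u ∈ [0,1] and θ, and natural numbers m ≤ t, let z = -cos(2θ) - i sin(2θ). Then (t-m)/2 · log((1 - u(1+cos 2θ))² + u² sin²(2θ)) + m · log((√(1-u) + √u cos θ)² + u sin²θ) ≤ m²/t. -/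
/-!
Writing `x = 2 √u √(1-u) cos θ`, the two arguments of the logarithms are `(1 + x)(1 - x)` and
`1 + x`, so with `r = m / t` the left-hand side is `t/2 · ((1 + r) log (1 + x) + (1 - r) log (1 - x))`.
The tangent-line bound `a log y ≤ (a - 1)² + y - 1` (from `log ≤ id - 1` at the point `a`),
applied with `a = 1 ± r`, bounds the bracket by `2 r²`, uniformly in `x`.
-/

open Real

lemma mul_log_le_sq_sub_one_add_sub_one {a y : ℝ} (ha : 0 ≤ a) (hy : 0 < y) :
    a * log y ≤ (a - 1) ^ 2 + (y - 1) := by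
  rcases ha.eq_or_lt with rfl | ha
  · simp only [zero_mul]
    nlinarith
  have hlog : log y = log a + log (y / a) := by
    rw [← log_mul ha.ne' (div_pos hy ha).ne', mul_div_cancel₀ _ ha.ne']
  have hya : a * (y / a - 1) = y - a := by field_simp
  calc a * log y ≤ a * ((a - 1) + (y / a - 1)) := by
        rw [hlog]
        gcongr
        · exact log_le_sub_one_of_pos ha
        · exact log_le_sub_one_of_pos (div_pos hy ha)
    _ = (a - 1) ^ 2 + (y - 1) := by rw [mul_add, hya]; ring

lemma one_add_mul_log_one_add_add_one_sub_mul_log_one_sub_le {r x : ℝ} (hr₀ : -1 ≤ r)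
    (hr₁ : r ≤ 1) (hx₀ : 0 < 1 + x) (hx₁ : 0 < 1 - x) :
    (1 + r) * log (1 + x) + (1 - r) * log (1 - x) ≤ 2 * r ^ 2 := by
  have hplus := mul_log_le_sq_sub_one_add_sub_one (a := 1 + r) (by linarith) hx₀
  have hminus := mul_log_le_sq_sub_one_add_sub_one (a := 1 - r) (by linarith) hx₁
  linarith

lemma sq_one_sub_mul_one_add_cos_two_mul_add {u : ℝ} (hu : u ∈ Set.Icc (0 : ℝ) 1) (θ : ℝ) :
    (1 - u * (1 + cos (2 * θ))) ^ 2 + u ^ 2 * sin (2 * θ) ^ 2 =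
      (1 + 2 * √u * √(1 - u) * cos θ) * (1 - 2 * √u * √(1 - u) * cos θ) := by
  have hu₀ : √u ^ 2 = u := sq_sqrt hu.1
  have hu₁ : √(1 - u) ^ 2 = 1 - u := sq_sqrt (by linarith [hu.2])
  rw [cos_two_mul, sin_two_mul]
  linear_combination (4 * u ^ 2 * cos θ ^ 2) * sin_sq θ
    + (4 * cos θ ^ 2 * √(1 - u) ^ 2) * hu₀ + (4 * u * cos θ ^ 2) * hu₁

lemma sq_sqrt_one_sub_add_sqrt_mul_cos_add {u : ℝ} (hu : u ∈ Set.Icc (0 : ℝ) 1) (θ : ℝ) :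
    (√(1 - u) + √u * cos θ) ^ 2 + u * sin θ ^ 2 = 1 + 2 * √u * √(1 - u) * cos θ := by
  have hu₀ : √u ^ 2 = u := sq_sqrt hu.1
  have hu₁ : √(1 - u) ^ 2 = 1 - u := sq_sqrt (by linarith [hu.2])
  linear_combination u * sin_sq θ + cos θ ^ 2 * hu₀ + hu₁

theorem log_magnitude_integrand_bound (t m : ℕ) (hm : m ≤ t) (ht : 1 ≤ t)
    (u θ : ℝ) (hu : u ∈ Set.Icc (0:ℝ) 1)
    (h1 : 0 < (1 - u * (1 + Real.cos (2 * θ))) ^ 2 + u ^ 2 * Real.sin (2 * θ) ^ 2)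
    (h2 : 0 < (Real.sqrt (1 - u) + Real.sqrt u * Real.cos θ) ^ 2 + u * Real.sin θ ^ 2) :
    ((t : ℝ) - m) / 2 *
        Real.log ((1 - u * (1 + Real.cos (2 * θ))) ^ 2 + u ^ 2 * Real.sin (2 * θ) ^ 2) +
      (m : ℝ) *
        Real.log ((Real.sqrt (1 - u) + Real.sqrt u * Real.cos θ) ^ 2 + u * Real.sin θ ^ 2)
      ≤ (m : ℝ) ^ 2 / t := by
  simp only [sq_one_sub_mul_one_add_cos_two_mul_add hu, sq_sqrt_one_sub_add_sqrt_mul_cos_add hu]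
    at h1 h2 ⊢
  set x := 2 * √u * √(1 - u) * cos θ
  have hx₁ : 0 < 1 - x := (pos_iff_pos_of_mul_pos h1).1 h2
  have ht₀ : (0 : ℝ) < t := by exact_mod_cast ht
  have hr₁ : (m : ℝ) / t ≤ 1 := (div_le_one ht₀).2 (by exact_mod_cast hm)
  have hr₀ : -1 ≤ (m : ℝ) / t := by linarith [show 0 ≤ (m : ℝ) / t by positivity]
  rw [log_mul h2.ne' hx₁.ne']
  calc ((t : ℝ) - m) / 2 * (log (1 + x) + log (1 - x)) + m * log (1 + x)
      = t / 2 * ((1 + m / t) * log (1 + x) + (1 - m / t) * log (1 - x)) := by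
        field_simp
        ring
    _ ≤ t / 2 * (2 * (m / t) ^ 2) := by
        gcongr
        exact one_add_mul_log_one_add_add_one_sub_mul_log_one_sub_le hr₀ hr₁ h2 hx₁
    _ = m ^ 2 / t := by
        field_simp
end

section
/- For natural numbers k ≤ t and z = cos θ + i sin θ on the unit circle, |(1+z)^{t-k}(1-z)^k| = 2^t |cos(θ/2)|^{t-k} |sin(θ/2)|^k, and this quantity is at most 2^t ((t-k)/t)^{(t-k)/2} (k/t)^{k/2} for all θ (with the conventions 0^0 = 1). -/
open Real Complex

/-!
Writing `z = e^{iθ}` and pulling out `e^{iθ/2}`, one gets `1 + z = 2 cos(θ/2) e^{iθ/2}` and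
`1 - z = -2i sin(θ/2) e^{iθ/2}`, which gives the norm. For the bound, weighted AM-GM applied to
`cos²(θ/2)` and `sin²(θ/2)` with weights `(t-k)/t` and `k/t` gives
`(cos²)^{(t-k)/t} (sin²)^{k/t} ≤ ((t-k)/t)^{(t-k)/t} (k/t)^{k/t} (cos² + sin²)`;
raising this to the power `t/2` is the claim.
-/

namespace Complex

lemma one_add_cos_two_mul_add_sin_two_mul_mul_I (x : ℂ) :
    1 + (cos (2 * x) + sin (2 * x) * I) = 2 * cos x * (cos x + sin x * I) := by
  rw [cos_two_mul, sin_two_mul]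
  ring

lemma one_sub_cos_two_mul_add_sin_two_mul_mul_I (x : ℂ) :
    1 - (cos (2 * x) + sin (2 * x) * I) = -2 * sin x * I * (cos x + sin x * I) := by
  rw [cos_two_mul, sin_two_mul]
  linear_combination (-2 : ℂ) * sin_sq_add_cos_sq x + 2 * sin x ^ 2 * I_sq

lemma norm_one_add_cos_add_sin_mul_I (θ : ℝ) :
    ‖1 + (cos θ + sin θ * I)‖ = 2 * |Real.cos (θ / 2)| := by
  have h := one_add_cos_two_mul_add_sin_two_mul_mul_I (θ / 2 : ℝ)
  rw [show (2 : ℂ) * (θ / 2 : ℝ) = θ by push_cast; ring] at h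
  rw [h, norm_mul, norm_mul, norm_cos_add_sin_mul_I, ← ofReal_cos, norm_real, Real.norm_eq_abs]
  norm_num

lemma norm_one_sub_cos_add_sin_mul_I (θ : ℝ) :
    ‖1 - (cos θ + sin θ * I)‖ = 2 * |Real.sin (θ / 2)| := by
  have h := one_sub_cos_two_mul_add_sin_two_mul_mul_I (θ / 2 : ℝ)
  rw [show (2 : ℂ) * (θ / 2 : ℝ) = θ by push_cast; ring] at h
  rw [h, norm_mul, norm_mul, norm_mul, norm_cos_add_sin_mul_I, ← ofReal_sin, norm_real,
    Real.norm_eq_abs]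
  norm_num

end Complex

namespace Real

lemma rpow_mul_rpow_le_mul_add {x y a b : ℝ} (hx : 0 ≤ x) (hy : 0 ≤ y) (ha : 0 ≤ a) (hb : 0 ≤ b)
    (hab : a + b = 1) : x ^ a * y ^ b ≤ a ^ a * b ^ b * (x + y) := by
  rcases ha.eq_or_lt with rfl | ha
  · obtain rfl : b = 1 := by linarith
    simp only [rpow_zero, rpow_one, one_mul]
    linarith
  rcases hb.eq_or_lt with rfl | hb
  · obtain rfl : a = 1 := by linarith
    simp only [rpow_zero, rpow_one, one_mul]
    linarith
  have amgm := geom_mean_le_arith_mean2_weighted ha.le hb.le (div_nonneg hx ha.le)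
    (div_nonneg hy hb.le) hab
  rw [mul_div_cancel₀ _ ha.ne', mul_div_cancel₀ _ hb.ne', div_rpow hx ha.le, div_rpow hy hb.le,
    div_mul_div_comm, div_le_iff₀ (by positivity)] at amgm
  linarith

lemma sq_rpow_div_two (c p : ℝ) : (c ^ 2) ^ (p / 2) = |c| ^ p := by
  rw [← sq_abs, ← rpow_natCast, ← rpow_mul (abs_nonneg c)]
  congr 1
  push_cast
  ring

lemma abs_rpow_mul_abs_rpow_le {c s p q : ℝ} (hcs : c ^ 2 + s ^ 2 = 1) (hp : 0 ≤ p) (hq : 0 ≤ q) :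
    |c| ^ p * |s| ^ q ≤ (p / (p + q)) ^ (p / 2) * (q / (p + q)) ^ (q / 2) := by
  rcases (add_nonneg hp hq).eq_or_lt with hpq | hpq
  · obtain ⟨rfl, rfl⟩ : p = 0 ∧ q = 0 := ⟨by linarith, by linarith⟩
    simp
  set n := p + q
  have key := rpow_mul_rpow_le_mul_add (sq_nonneg c) (sq_nonneg s) (div_nonneg hp hpq.le)
    (div_nonneg hq hpq.le) (by rw [← add_div, div_self hpq.ne'])
  rw [hcs, mul_one] at key
  have hexp : ∀ r, r / n * (n / 2) = r / 2 := fun r => by field_simp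
  calc |c| ^ p * |s| ^ q = ((c ^ 2) ^ (p / n) * (s ^ 2) ^ (q / n)) ^ (n / 2) := by
        rw [mul_rpow (by positivity) (by positivity), ← rpow_mul (sq_nonneg c),
          ← rpow_mul (sq_nonneg s), hexp, hexp, sq_rpow_div_two, sq_rpow_div_two]
    _ ≤ ((p / n) ^ (p / n) * (q / n) ^ (q / n)) ^ (n / 2) :=
        rpow_le_rpow (by positivity) key (by positivity)
    _ = (p / n) ^ (p / 2) * (q / n) ^ (q / 2) := by
        rw [mul_rpow (by positivity) (by positivity), ← rpow_mul (by positivity),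
          ← rpow_mul (by positivity), hexp, hexp]

end Real

theorem kravchuk_genfun_unit_circle_bound (k t : ℕ) (hk : k ≤ t) (θ : ℝ) :
    (‖(1 + (Complex.cos θ + Complex.sin θ * Complex.I)) ^ (t - k) *
          (1 - (Complex.cos θ + Complex.sin θ * Complex.I)) ^ k‖
        = 2 ^ t * |Real.cos (θ / 2)| ^ (t - k) * |Real.sin (θ / 2)| ^ k) ∧
      2 ^ t * |Real.cos (θ / 2)| ^ (t - k) * |Real.sin (θ / 2)| ^ k
        ≤ 2 ^ t * (((t : ℝ) - k) / t) ^ (((t : ℝ) - k) / 2) * ((k : ℝ) / t) ^ ((k : ℝ) / 2) := by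
  obtain ⟨m, rfl⟩ := Nat.exists_eq_add_of_le' hk
  have hm : m + k - k = m := Nat.add_sub_cancel m k
  have hcast : ((m + k : ℕ) : ℝ) - k = m := by push_cast; ring
  rw [hm, hcast]
  constructor
  · rw [norm_mul, norm_pow, norm_pow, norm_one_add_cos_add_sin_mul_I,
      norm_one_sub_cos_add_sin_mul_I]
    ring
  · have hcs : Real.cos (θ / 2) ^ 2 + Real.sin (θ / 2) ^ 2 = 1 := cos_sq_add_sin_sq _
    have bound := abs_rpow_mul_abs_rpow_le hcs m.cast_nonneg k.cast_nonneg
    rw [rpow_natCast, rpow_natCast, ← Nat.cast_add] at bound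
    rw [mul_assoc, mul_assoc]
    gcongr
end
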